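/- Let 1 ≤ p ≤ ∞, let Λ and Λ' be relatively-separated subsets of ℝ^d, and let A = (a(λ,λ'))_{λ∈Λ,λ'∈Λ'} be a matrix in the Sjöstrand class C(Λ,Λ'). Then A is a bounded operator from ℓ^p(Λ') to ℓ^p(Λ), and there exists a constant C depending only on d and p such that ‖Ac‖_{ℓ^p(Λ)} ≤ C R(Λ)^{1/p} R(Λ')^{1−1/p} ‖A‖_C ‖c‖_{ℓ^p(Λ')} for all c ∈ ℓ^p(Λ'). -/

import Mathlib

open scoped ENNReal NNReal

/-- The cube `k + [0,1)^d` in `ℝ^d`. -/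
def unitCube {d : ℕ} (k : Fin d → ℤ) : Set (Fin d → ℝ) :=
  {x | ∀ i, (k i : ℝ) ≤ x i ∧ x i < k i + 1}

/-- The relative-separation constant `R(Λ) = sup_x ∑_{λ ∈ Λ} χ_{λ+[0,1)^d}(x)` of
a subset `Λ` of `ℝ^d`; `Λ` is relatively separated when `relSep Λ < ∞`. -/
noncomputable def relSep {d : ℕ} (Λ : Set (Fin d → ℝ)) : ℝ≥0∞ :=
  ⨆ x : Fin d → ℝ, ∑' l : Λ,
    (unitCube (0 : Fin d → ℤ)).indicator (fun _ => (1 : ℝ≥0∞)) (x - (l : Fin d → ℝ))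

/-- The Sjöstrand class norm
`‖A‖_C = ∑_{k ∈ ℤ^d} sup { |a(λ,λ')| : λ - λ' ∈ k + [0,1)^d }` of a matrix indexed by
`Λ × Λ'`; the matrix belongs to the Sjöstrand class `C(Λ,Λ')` when `sjNorm a < ∞`. -/
noncomputable def sjNorm {d : ℕ} {Λ Λ' : Set (Fin d → ℝ)} (a : Λ → Λ' → ℂ) : ℝ≥0∞ :=
  ∑' k : Fin d → ℤ, ⨆ (l : Λ) (l' : Λ')
    (_ : (l : Fin d → ℝ) - (l' : Fin d → ℝ) ∈ unitCube k), (‖a l l'‖₊ : ℝ≥0∞)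

/-- The action `(Ac)(λ) = ∑_{λ'} a(λ,λ') c(λ')` of a matrix on sequences. -/
noncomputable def matApply {d : ℕ} {Λ Λ' : Set (Fin d → ℝ)}
    (a : Λ → Λ' → ℂ) (c : Λ' → ℂ) : Λ → ℂ :=
  fun l => ∑' l' : Λ', a l l' * c l'

/-- The `ℓ^p` norm (valued in `ℝ≥0∞`) of an `ℝ≥0∞`-valued family:
for `p = ∞` it is the supremum, otherwise `(∑ f i ^ p)^(1/p)`. -/
noncomputable def seqNormE {ι : Type*} (p : ℝ≥0∞) (f : ι → ℝ≥0∞) : ℝ≥0∞ :=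
  if p = ∞ then ⨆ i, f i else (∑' i, f i ^ p.toReal) ^ (1 / p.toReal)

/-- The `ℓ^p` norm (valued in `ℝ≥0∞`) of a complex-valued family. -/
noncomputable def seqNorm {ι : Type*} (p : ℝ≥0∞) (f : ι → ℂ) : ℝ≥0∞ :=
  seqNormE p fun i => (‖f i‖₊ : ℝ≥0∞)

/-- An operator `A` between sequence spaces has `ℓ^p`-stability if there is a
positive finite constant `C` with `C⁻¹ ‖c‖_p ≤ ‖A c‖_p ≤ C ‖c‖_p` for every `c ∈ ℓ^p`. -/
def HasStability {ι κ : Type*} (p : ℝ≥0∞) (A : (ι → ℂ) → κ → ℂ) : Prop :=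
  ∃ C : ℝ≥0∞, 0 < C ∧ C < ∞ ∧
    ∀ c : ι → ℂ, seqNorm p c < ∞ →
      C⁻¹ * seqNorm p c ≤ seqNorm p (A c) ∧ seqNorm p (A c) ≤ C * seqNorm p c

/-!
Let `s k` be the supremum of `|a(λ,λ')|` over the generalized diagonal `λ - λ' ∈ k + [0,1)^d`,
so that `∑ k, s k = ‖A‖_C`, and dominate `|a(λ,λ')|` by the kernel `s ⌊λ - λ'⌋`. For fixed `λ`
and `k` at most `R(Λ')` points `λ'` satisfy `λ - λ' ∈ k + [0,1)^d`, so the row sums of the kernel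
are at most `‖A‖_C R(Λ')`. For fixed `λ'` the points `λ` lie in a cube `y + [0,1)^d`, which is
covered by `2^d` cubes of the form `x - [0,1)^d` counted by `R(Λ)`; so the column sums are at most
`2^d R(Λ) ‖A‖_C`. Schur's test then bounds the operator on `ℓ^p` by
`(2^d R(Λ) ‖A‖_C)^(1/p) (R(Λ') ‖A‖_C)^(1-1/p)`.
-/

section UnitCube

variable {d : ℕ}

lemma mem_unitCube_floor (x : Fin d → ℝ) : x ∈ unitCube (fun i => ⌊x i⌋) :=
  fun _ => ⟨Int.floor_le _, Int.lt_floor_add_one _⟩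

lemma mem_unitCube_iff_floor_eq {x : Fin d → ℝ} {k : Fin d → ℤ} :
    x ∈ unitCube k ↔ (fun i => ⌊x i⌋) = k := by
  refine ⟨fun h => funext fun i => Int.floor_eq_iff.mpr (h i), ?_⟩
  rintro rfl
  exact mem_unitCube_floor x

lemma sub_intCast_mem_unitCube_zero_iff {x : Fin d → ℝ} {k : Fin d → ℤ} :
    (x - fun i => (k i : ℝ)) ∈ unitCube 0 ↔ x ∈ unitCube k := by
  simp only [unitCube, Set.mem_ofPred_eq, Pi.sub_apply, Pi.zero_apply, Int.cast_zero, zero_add]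
  refine forall_congr' fun i => ?_
  constructor <;> rintro ⟨h0, h1⟩ <;> constructor <;> linarith

lemma exists_sub_mem_unitCube_zero {z : Fin d → ℝ} (hz : z ∈ unitCube 0) :
    ∃ e : Fin d → Fin 2, ((fun i => ((e i : ℕ) : ℝ)) - z) ∈ unitCube 0 := by
  refine ⟨fun i => if z i = 0 then 0 else 1, fun i => ?_⟩
  obtain ⟨h0, h1⟩ := hz i
  simp only [Pi.zero_apply, Int.cast_zero, zero_add] at h0 h1
  by_cases hzi : z i = 0
  · simp [hzi]
  · have : 0 < z i := lt_of_le_of_ne h0 (Ne.symm hzi)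
    simp only [hzi, if_false, Pi.sub_apply, Pi.zero_apply, Int.cast_zero, zero_add, Fin.val_one,
      Nat.cast_one]
    constructor <;> linarith

end UnitCube

section Counting

variable {d : ℕ}

lemma tsum_indicator_unitCube_sub_le_relSep (Λ : Set (Fin d → ℝ)) (x : Fin d → ℝ)
    (k : Fin d → ℤ) :
    ∑' l : Λ, (unitCube k).indicator (fun _ => (1 : ℝ≥0∞)) (x - (l : Fin d → ℝ)) ≤
      relSep Λ := by
  have hshift : ∀ l : Λ, (unitCube k).indicator (fun _ => (1 : ℝ≥0∞)) (x - (l : Fin d → ℝ)) =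
      (unitCube 0).indicator (fun _ => 1) ((x - fun i => (k i : ℝ)) - (l : Fin d → ℝ)) := by
    intro l
    rw [sub_right_comm]
    by_cases h : x - (l : Fin d → ℝ) ∈ unitCube k
    · rw [Set.indicator_of_mem h, Set.indicator_of_mem (sub_intCast_mem_unitCube_zero_iff.mpr h)]
    · rw [Set.indicator_of_notMem h,
        Set.indicator_of_notMem (mt sub_intCast_mem_unitCube_zero_iff.mp h)]
  rw [tsum_congr hshift]
  exact le_iSup_of_le (x - fun i => (k i : ℝ)) le_rfl

lemma tsum_indicator_unitCube_sub_le_two_pow_mul_relSep (Λ : Set (Fin d → ℝ))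
    (y : Fin d → ℝ) (k : Fin d → ℤ) :
    ∑' l : Λ, (unitCube k).indicator (fun _ => (1 : ℝ≥0∞)) ((l : Fin d → ℝ) - y) ≤
      2 ^ d * relSep Λ := by
  set corner : (Fin d → Fin 2) → Fin d → ℝ :=
    fun e => y + (fun i => (k i : ℝ)) + fun i => ((e i : ℕ) : ℝ)
  have hcover : ∀ l : Λ, (unitCube k).indicator (fun _ => (1 : ℝ≥0∞)) ((l : Fin d → ℝ) - y) ≤
      ∑ e, (unitCube 0).indicator (fun _ => 1) (corner e - (l : Fin d → ℝ)) := by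
    intro l
    by_cases hl : (l : Fin d → ℝ) - y ∈ unitCube k
    · obtain ⟨e, he⟩ := exists_sub_mem_unitCube_zero (sub_intCast_mem_unitCube_zero_iff.mpr hl)
      have hcorner : corner e - (l : Fin d → ℝ) ∈ unitCube 0 := by
        convert he using 1
        simp only [corner]
        abel
      rw [Set.indicator_of_mem hl]
      exact (Set.indicator_of_mem hcorner (fun _ => (1 : ℝ≥0∞))).symm.trans_le
        (Finset.single_le_sum (f := fun e => (unitCube 0).indicator (fun _ => (1 : ℝ≥0∞))
          (corner e - (l : Fin d → ℝ))) (fun _ _ => zero_le) (Finset.mem_univ e))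
    · simp [Set.indicator_of_notMem hl]
  calc ∑' l : Λ, (unitCube k).indicator (fun _ => (1 : ℝ≥0∞)) ((l : Fin d → ℝ) - y)
      ≤ ∑' l : Λ, ∑ e, (unitCube 0).indicator (fun _ => (1 : ℝ≥0∞)) (corner e - (l : Fin d → ℝ)) :=
        ENNReal.tsum_le_tsum hcover
    _ = ∑ e, ∑' l : Λ, (unitCube 0).indicator (fun _ => (1 : ℝ≥0∞)) (corner e - (l : Fin d → ℝ)) :=
        Summable.tsum_finsetSum fun _ _ => ENNReal.summable
    _ ≤ ∑ _e : Fin d → Fin 2, relSep Λ :=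
        Finset.sum_le_sum fun e _ => tsum_indicator_unitCube_sub_le_relSep Λ (corner e) 0
    _ = 2 ^ d * relSep Λ := by simp [Finset.card_univ]

lemma apply_floor_eq_tsum_mul_indicator (s : (Fin d → ℤ) → ℝ≥0∞) (x : Fin d → ℝ) :
    s (fun i => ⌊x i⌋) = ∑' k, s k * (unitCube k).indicator (fun _ => 1) x := by
  rw [tsum_eq_single (fun i => ⌊x i⌋), Set.indicator_of_mem (mem_unitCube_floor x), mul_one]
  intro k hk
  rw [Set.indicator_of_notMem (fun h => hk (mem_unitCube_iff_floor_eq.mp h).symm), mul_zero]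

lemma tsum_apply_floor_le {ι : Type*} (s : (Fin d → ℤ) → ℝ≥0∞) (f : ι → Fin d → ℝ)
    {N : ℝ≥0∞} (hN : ∀ k, ∑' j, (unitCube k).indicator (fun _ => (1 : ℝ≥0∞)) (f j) ≤ N) :
    ∑' j, s (fun i => ⌊f j i⌋) ≤ (∑' k, s k) * N :=
  calc ∑' j, s (fun i => ⌊f j i⌋)
      = ∑' k, s k * ∑' j, (unitCube k).indicator (fun _ => 1) (f j) := by
        simp only [apply_floor_eq_tsum_mul_indicator s]
        rw [ENNReal.tsum_comm]
        simp only [ENNReal.tsum_mul_left]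
    _ ≤ ∑' k, s k * N := ENNReal.tsum_le_tsum fun k => by gcongr; exact hN k
    _ = (∑' k, s k) * N := ENNReal.tsum_mul_right

end Counting

section Schur

lemma one_le_toReal_of_one_le {p : ℝ≥0∞} (hp : 1 ≤ p) (hp_top : p ≠ ∞) : 1 ≤ p.toReal := by
  simpa using ENNReal.toReal_mono hp_top hp

lemma seqNormE_mono {ι : Type*} (p : ℝ≥0∞) {f g : ι → ℝ≥0∞} (hfg : f ≤ g) :
    seqNormE p f ≤ seqNormE p g := by
  unfold seqNormE
  split_ifs
  · exact iSup_mono hfg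
  · gcongr with i
    exact hfg i

/-- Hölder for the counting measure, splitting `K = K ^ (1 - 1/q) * K ^ (1/q)`. -/
lemma tsum_mul_le_tsum_rpow_mul_tsum_mul_rpow {ι : Type*} (K v : ι → ℝ≥0∞) {q : ℝ}
    (hq : 1 < q) :
    ∑' j, K j * v j ≤ (∑' j, K j) ^ (1 - 1 / q) * (∑' j, K j * v j ^ q) ^ (1 / q) := by
  let _ : MeasurableSpace ι := ⊤
  have hq0 : 0 < q := one_pos.trans hq
  have hpq : (q / (q - 1)).HolderConjugate q := (Real.HolderConjugate.conjExponent hq).symm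
  have hconj : 1 / (q / (q - 1)) = 1 - 1 / q := by
    rw [one_div, one_div]
    linarith [hpq.inv_add_inv_eq_one]
  have hholder := ENNReal.lintegral_mul_le_Lp_mul_Lq MeasureTheory.Measure.count hpq
    (f := fun j => K j ^ (1 - 1 / q)) (g := fun j => K j ^ (1 / q) * v j)
    measurable_from_top.aemeasurable measurable_from_top.aemeasurable
  have hprod : ∀ j, K j ^ (1 - 1 / q) * (K j ^ (1 / q) * v j) = K j * v j := fun j => by
    rw [← mul_assoc, ← ENNReal.rpow_add_of_nonneg _ _
      (sub_nonneg.mpr ((div_le_one hq0).mpr hq.le)) (by positivity), sub_add_cancel,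
      ENNReal.rpow_one]
  have hK : ∀ j, (K j ^ (1 - 1 / q)) ^ (q / (q - 1)) = K j := fun j => by
    rw [← ENNReal.rpow_mul, ← hconj, one_div_mul_cancel hpq.pos.ne', ENNReal.rpow_one]
  have hKv : ∀ j, (K j ^ (1 / q) * v j) ^ q = K j * v j ^ q := fun j => by
    rw [ENNReal.mul_rpow_of_nonneg _ _ hq0.le, ← ENNReal.rpow_mul, one_div_mul_cancel hq0.ne',
      ENNReal.rpow_one]
  simpa only [MeasureTheory.lintegral_count' measurable_from_top, hconj, Pi.mul_apply, hprod, hK,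
    hKv] using hholder

lemma tsum_mul_rpow_le {ι : Type*} (K v : ι → ℝ≥0∞) {q : ℝ} (hq : 1 ≤ q) :
    (∑' j, K j * v j) ^ q ≤ (∑' j, K j) ^ (q - 1) * ∑' j, K j * v j ^ q := by
  rcases hq.eq_or_lt with rfl | hq
  · simp
  have hq0 : 0 < q := one_pos.trans hq
  calc (∑' j, K j * v j) ^ q
      ≤ ((∑' j, K j) ^ (1 - 1 / q) * (∑' j, K j * v j ^ q) ^ (1 / q)) ^ q := by
        gcongr
        exact tsum_mul_le_tsum_rpow_mul_tsum_mul_rpow K v hq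
    _ = (∑' j, K j) ^ (q - 1) * ∑' j, K j * v j ^ q := by
        rw [ENNReal.mul_rpow_of_nonneg _ _ hq0.le, ← ENNReal.rpow_mul, ← ENNReal.rpow_mul,
          one_div_mul_cancel hq0.ne', ENNReal.rpow_one, sub_mul, one_div_mul_cancel hq0.ne',
          one_mul]

variable {ι κ : Type*} {K : κ → ι → ℝ≥0∞} {α β : ℝ≥0∞}

lemma tsum_rpow_tsum_mul_le (v : ι → ℝ≥0∞) {q : ℝ} (hq : 1 ≤ q)
    (hrow : ∀ i, ∑' j, K i j ≤ α) (hcol : ∀ j, ∑' i, K i j ≤ β) :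
    ∑' i, (∑' j, K i j * v j) ^ q ≤ α ^ (q - 1) * β * ∑' j, v j ^ q :=
  calc ∑' i, (∑' j, K i j * v j) ^ q
      ≤ ∑' i, α ^ (q - 1) * ∑' j, K i j * v j ^ q := ENNReal.tsum_le_tsum fun i =>
        (tsum_mul_rpow_le (K i) v hq).trans
          (by gcongr ?_ * _; exact ENNReal.rpow_le_rpow (hrow i) (sub_nonneg.mpr hq))
    _ = α ^ (q - 1) * ∑' j, (∑' i, K i j) * v j ^ q := by
        rw [ENNReal.tsum_mul_left, ENNReal.tsum_comm]
        simp only [ENNReal.tsum_mul_right]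
    _ ≤ α ^ (q - 1) * ∑' j, β * v j ^ q := by gcongr with j; exact hcol j
    _ = α ^ (q - 1) * β * ∑' j, v j ^ q := by rw [ENNReal.tsum_mul_left, mul_assoc]

/-- Schur's test. For `p = ∞` the exponent `1 / p.toReal` is `0`, so the bound is `α ‖v‖_∞`. -/
theorem seqNormE_tsum_mul_le (v : ι → ℝ≥0∞) {p : ℝ≥0∞} (hp : 1 ≤ p)
    (hrow : ∀ i, ∑' j, K i j ≤ α) (hcol : ∀ j, ∑' i, K i j ≤ β) :
    seqNormE p (fun i => ∑' j, K i j * v j) ≤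
      β ^ (1 / p.toReal) * α ^ (1 - 1 / p.toReal) * seqNormE p v := by
  by_cases hp_top : p = ∞
  · subst hp_top
    simp only [seqNormE, if_pos, ENNReal.toReal_top, div_zero, ENNReal.rpow_zero, sub_zero,
      ENNReal.rpow_one, one_mul]
    refine iSup_le fun i => ?_
    calc ∑' j, K i j * v j ≤ ∑' j, K i j * ⨆ j', v j' :=
          ENNReal.tsum_le_tsum fun j => by gcongr; exact le_iSup v j
      _ ≤ α * ⨆ j, v j := by rw [ENNReal.tsum_mul_right]; gcongr; exact hrow i
  have hq : 1 ≤ p.toReal := one_le_toReal_of_one_le hp hp_top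
  have hq0 : 0 < p.toReal := one_pos.trans_le hq
  simp only [seqNormE, if_neg hp_top]
  calc (∑' i, (∑' j, K i j * v j) ^ p.toReal) ^ (1 / p.toReal)
      ≤ (α ^ (p.toReal - 1) * β * ∑' j, v j ^ p.toReal) ^ (1 / p.toReal) := by
        gcongr
        exact tsum_rpow_tsum_mul_le v hq hrow hcol
    _ = β ^ (1 / p.toReal) * α ^ (1 - 1 / p.toReal) * (∑' j, v j ^ p.toReal) ^ (1 / p.toReal) := by
        rw [ENNReal.mul_rpow_of_nonneg _ _ (by positivity),
          ENNReal.mul_rpow_of_nonneg _ _ (by positivity), ← ENNReal.rpow_mul, sub_mul,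
          mul_one_div_cancel hq0.ne', one_mul, mul_comm (α ^ _)]

end Schur

section Sjostrand

variable {d : ℕ} {Λ Λ' : Set (Fin d → ℝ)}

noncomputable def sjDiag (a : Λ → Λ' → ℂ) (k : Fin d → ℤ) : ℝ≥0∞ :=
  ⨆ (l : Λ) (l' : Λ') (_ : (l : Fin d → ℝ) - (l' : Fin d → ℝ) ∈ unitCube k), (‖a l l'‖₊ : ℝ≥0∞)

noncomputable def sjEnvelope (a : Λ → Λ' → ℂ) (l : Λ) (l' : Λ') : ℝ≥0∞ :=
  sjDiag a fun i => ⌊((l : Fin d → ℝ) - (l' : Fin d → ℝ)) i⌋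

lemma nnnorm_le_sjEnvelope (a : Λ → Λ' → ℂ) (l : Λ) (l' : Λ') :
    (‖a l l'‖₊ : ℝ≥0∞) ≤ sjEnvelope a l l' :=
  le_iSup_of_le l <| le_iSup_of_le l' <| le_iSup_of_le (mem_unitCube_floor _) le_rfl

lemma tsum_sjEnvelope_row_le (a : Λ → Λ' → ℂ) (l : Λ) :
    ∑' l', sjEnvelope a l l' ≤ sjNorm a * relSep Λ' :=
  tsum_apply_floor_le _ _ fun k => tsum_indicator_unitCube_sub_le_relSep Λ' l k

lemma tsum_sjEnvelope_col_le (a : Λ → Λ' → ℂ) (l' : Λ') :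
    ∑' l, sjEnvelope a l l' ≤ sjNorm a * (2 ^ d * relSep Λ) :=
  tsum_apply_floor_le _ _ fun k => tsum_indicator_unitCube_sub_le_two_pow_mul_relSep Λ l' k

lemma enorm_matApply_le (a : Λ → Λ' → ℂ) (c : Λ' → ℂ) (l : Λ) :
    ‖matApply a c l‖ₑ ≤ ∑' l', sjEnvelope a l l' * ‖c l'‖ₑ :=
  tsum_of_enorm_bounded ENNReal.summable.hasSum fun l' => by
    rw [enorm_mul]
    gcongr
    exact nnnorm_le_sjEnvelope a l l'

end Sjostrand

/-- **Boundedness of Sjöstrand-class matrices on `ℓ^p`.** For `1 ≤ p ≤ ∞` there is a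
constant `C` depending only on `d` and `p` such that for all relatively-separated
`Λ, Λ' ⊆ ℝ^d`, every matrix `A ∈ C(Λ,Λ')` satisfies
`‖Ac‖_{ℓ^p(Λ)} ≤ C R(Λ)^{1/p} R(Λ')^{1-1/p} ‖A‖_C ‖c‖_{ℓ^p(Λ')}` for all `c ∈ ℓ^p(Λ')`. -/
theorem sjostrand_matrix_bounded (d : ℕ) (p : ℝ≥0∞) (hp : 1 ≤ p) :
    ∃ C : ℝ≥0∞, 0 < C ∧ C < ∞ ∧
      ∀ (Λ Λ' : Set (Fin d → ℝ)), relSep Λ < ∞ → relSep Λ' < ∞ →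
        ∀ a : Λ → Λ' → ℂ, sjNorm a < ∞ →
          ∀ c : Λ' → ℂ, seqNorm p c < ∞ →
            seqNorm p (matApply a c) ≤
              C * relSep Λ ^ (1 / p.toReal) * relSep Λ' ^ (1 - 1 / p.toReal) *
                sjNorm a * seqNorm p c := by
  refine ⟨2 ^ d, by positivity, by simp, fun Λ Λ' _ _ a _ c _ => ?_⟩
  set t := 1 / p.toReal
  have ht : t ≤ 1 := by
    rcases eq_or_ne p ∞ with rfl | hp_top
    · simp [t]
    · exact div_le_one_of_le₀ (one_le_toReal_of_one_le hp hp_top) ENNReal.toReal_nonneg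
  have ht' : 0 ≤ 1 - t := sub_nonneg.mpr ht
  set S := sjNorm a
  calc seqNorm p (matApply a c)
      ≤ seqNormE p fun l => ∑' l', sjEnvelope a l l' * ‖c l'‖ₑ :=
        seqNormE_mono p (enorm_matApply_le a c)
    _ ≤ (S * (2 ^ d * relSep Λ)) ^ t * (S * relSep Λ') ^ (1 - t) * seqNorm p c :=
        seqNormE_tsum_mul_le _ hp (tsum_sjEnvelope_row_le a) (tsum_sjEnvelope_col_le a)
    _ = (2 ^ d) ^ t * relSep Λ ^ t * relSep Λ' ^ (1 - t) * (S ^ t * S ^ (1 - t)) * seqNorm p c := by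
        rw [ENNReal.mul_rpow_of_nonneg _ _ (by positivity),
          ENNReal.mul_rpow_of_nonneg _ _ (by positivity), ENNReal.mul_rpow_of_nonneg _ _ ht']
        ring
    _ ≤ 2 ^ d * relSep Λ ^ t * relSep Λ' ^ (1 - t) * S * seqNorm p c := by
        rw [← ENNReal.rpow_add_of_nonneg _ _ (by positivity) ht', add_sub_cancel, ENNReal.rpow_one]
        gcongr
        exact (ENNReal.rpow_le_rpow_of_exponent_le (one_le_pow₀ one_le_two) ht).trans_eq
          (ENNReal.rpow_one _)
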